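/- arXiv:2004.03634 — 3 statements merged into one kernel-verified Lean document; each statement's English description precedes it below -/
import Mathlib

section
/- Let 0 ≤ T₁ < T₂ < ∞ and η > 0. Suppose φ₁ ∈ L¹(T₁, T₂+η), φ₂ ∈ L¹(0, T₂−T₁+η), φ₂ ≥ 0 on (0, T₂−T₁+η), and φ₁ keeps a constant sign on (T₁, T₂+η). Then ‖φ₁‖_{L¹(T₁,T₂)} · ‖φ₂‖_{L¹(0,η)} ≤ ‖ t ↦ ∫_{T₁}^t φ₁(s) φ₂(t−s) ds ‖_{L¹(T₁, T₂+η)}. -/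
open MeasureTheory Set

lemma rc_core (T₁ T₂ η : ℝ)
    (H₁ H₂ : ℝ → ENNReal) (m₁ : Measurable H₁) (m₂ : Measurable H₂)
    (f₁ : ∫⁻ s, H₁ s ≠ ⊤) (f₂ : ∫⁻ s, H₂ s ≠ ⊤) :
    ((∫⁻ s in Ioc T₁ T₂, H₁ s) * (∫⁻ u in Ioc 0 η, H₂ u) ≤
      ∫⁻ t in Ioc T₁ (T₂+η), ∫⁻ s in Ioc T₁ t, H₁ s * H₂ (t-s))
    ∧ (∫⁻ t in Ioc T₁ (T₂+η), ∫⁻ s in Ioc T₁ t, H₁ s * H₂ (t-s)) < ⊤ := by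
  set S : Set (ℝ × ℝ) := {p | (T₁ < p.1 ∧ p.1 ≤ T₂ + η) ∧ T₁ < p.2 ∧ p.2 ≤ p.1} with hS
  have hSm : MeasurableSet S := by
    apply MeasurableSet.inter
    · exact ((measurableSet_lt measurable_const measurable_fst).inter
        (measurableSet_le measurable_fst measurable_const))
    · exact ((measurableSet_lt measurable_const measurable_snd).inter
        (measurableSet_le measurable_snd measurable_fst))
  set W : ℝ × ℝ → ENNReal := S.indicator (fun p => H₁ p.2 * H₂ (p.1 - p.2)) with hW
  have hWm : Measurable W :=
    ((m₁.comp measurable_snd).mul (m₂.comp (measurable_fst.sub measurable_snd))).indicator hSm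
  -- J equals the product-space lintegral of W
  have hJ : (∫⁻ t in Ioc T₁ (T₂+η), ∫⁻ s in Ioc T₁ t, H₁ s * H₂ (t-s))
      = ∫⁻ p : ℝ × ℝ, W p ∂(volume.prod volume) := by
    rw [← lintegral_indicator measurableSet_Ioc]
    have : ∀ t : ℝ, (Ioc T₁ (T₂+η)).indicator
        (fun t => ∫⁻ s in Ioc T₁ t, H₁ s * H₂ (t-s)) t
        = ∫⁻ s, W (t, s) := by
      intro t
      by_cases ht : t ∈ Ioc T₁ (T₂+η)
      · rw [indicator_of_mem ht, ← lintegral_indicator measurableSet_Ioc]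
        congr 1
        funext s
        by_cases hs : s ∈ Ioc T₁ t
        · rw [indicator_of_mem hs, hW, indicator_of_mem]
          exact ⟨⟨ht.1, ht.2⟩, hs.1, hs.2⟩
        · rw [indicator_of_notMem hs, hW, indicator_of_notMem]
          intro hmem
          exact hs ⟨hmem.2.1, hmem.2.2⟩
      · rw [indicator_of_notMem ht]
        symm
        rw [← lintegral_zero]
        congr 1
        funext s
        rw [hW, indicator_of_notMem]
        intro hmem
        exact ht ⟨hmem.1.1, hmem.1.2⟩
    simp_rw [this]
    exact lintegral_lintegral (f := fun t s => W (t, s)) (by exact hWm.aemeasurable)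
  have transl : ∀ (G : ℝ → ENNReal), Measurable G → ∀ s : ℝ,
      (∫⁻ t, G (t - s)) = ∫⁻ t, G t := by
    intro G hG s
    have h1 : (fun t : ℝ => G (t - s)) = G ∘ (fun t : ℝ => t + (-s)) := by
      funext t; simp [sub_eq_add_neg]
    rw [h1]
    exact (measurePreserving_add_right volume (-s)).lintegral_comp hG
  constructor
  · -- lower bound
    set W' : ℝ × ℝ → ENNReal :=
      fun p => (Ioo T₁ T₂).indicator H₁ p.2 * (Ioo 0 η).indicator H₂ (p.1 - p.2) with hW'
    have hle : ∀ p, W' p ≤ W p := by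
      intro p
      by_cases h2 : p.2 ∈ Ioo T₁ T₂
      · by_cases h12 : p.1 - p.2 ∈ Ioo 0 η
        · rw [hW', hW]
          simp only [indicator_of_mem h2, indicator_of_mem h12]
          rw [indicator_of_mem]
          constructor
          · constructor
            · linarith [h2.1, h12.1]
            · linarith [h2.2, h12.2]
          · exact ⟨h2.1, by linarith [h12.1]⟩
        · simp [hW', indicator_of_notMem h12]
      · simp [hW', indicator_of_notMem h2]
    have key : (∫⁻ p : ℝ × ℝ, W' p ∂(volume.prod volume))
        = (∫⁻ s in Ioc T₁ T₂, H₁ s) * (∫⁻ u in Ioc 0 η, H₂ u) := by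
      have hW'm : Measurable W' :=
        ((m₁.indicator measurableSet_Ioo).comp measurable_snd).mul
          ((m₂.indicator measurableSet_Ioo).comp (measurable_fst.sub measurable_snd))
      rw [lintegral_prod_symm _ hW'm.aemeasurable]
      have : ∀ s : ℝ, (∫⁻ t, W' (t, s)) =
          (Ioo T₁ T₂).indicator H₁ s * (∫⁻ u in Ioo 0 η, H₂ u) := by
        intro s
        rw [← lintegral_indicator measurableSet_Ioo]
        calc (∫⁻ t, W' (t, s))
            = ∫⁻ t, (Ioo T₁ T₂).indicator H₁ s * (Ioo 0 η).indicator H₂ (t - s) := rfl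
          _ = (Ioo T₁ T₂).indicator H₁ s * ∫⁻ t, (Ioo 0 η).indicator H₂ (t - s) := by
              have hm : Measurable fun t : ℝ => (Ioo 0 η).indicator H₂ (t - s) :=
                (m₂.indicator measurableSet_Ioo).comp (measurable_id.sub measurable_const)
              exact lintegral_const_mul _ hm
          _ = _ := by rw [transl _ (m₂.indicator measurableSet_Ioo) s]
      simp_rw [this]
      rw [lintegral_mul_const _ (m₁.indicator measurableSet_Ioo),
        lintegral_indicator measurableSet_Ioo,
        Measure.restrict_congr_set Ioo_ae_eq_Ioc,
        Measure.restrict_congr_set Ioo_ae_eq_Ioc]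
    rw [hJ, ← key]
    exact lintegral_mono hle
  · -- finiteness
    rw [hJ]
    calc (∫⁻ p : ℝ × ℝ, W p ∂(volume.prod volume))
        ≤ ∫⁻ p : ℝ × ℝ, H₁ p.2 * H₂ (p.1 - p.2) ∂(volume.prod volume) :=
          lintegral_mono fun p => indicator_le_self _ _ p
      _ = ∫⁻ s, ∫⁻ t, H₁ s * H₂ (t - s) :=
          lintegral_prod_symm (fun p : ℝ × ℝ => H₁ p.2 * H₂ (p.1 - p.2))
            ((m₁.comp measurable_snd).mul
              (m₂.comp (measurable_fst.sub measurable_snd))).aemeasurable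
      _ = ∫⁻ s, H₁ s * ∫⁻ t, H₂ t := by
          congr 1
          funext s
          have hm : Measurable fun t : ℝ => H₂ (t - s) :=
            m₂.comp (measurable_id.sub measurable_const)
          rw [lintegral_const_mul _ hm, transl _ m₂ s]
      _ = (∫⁻ s, H₁ s) * ∫⁻ t, H₂ t := lintegral_mul_const _ m₁
      _ < ⊤ := ENNReal.mul_lt_top f₁.lt_top f₂.lt_top


-- helper: construct the nice version of a function
lemma rc_nice {φ : ℝ → ℝ} {A : Set ℝ} (hA : MeasurableSet A)
    (hφ : IntegrableOn φ A) (hpos : ∀ᵐ s ∂(volume.restrict A), 0 ≤ φ s) :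
    ∃ h : ℝ → ℝ, Measurable h ∧ (∀ s, 0 ≤ h s) ∧ (∀ s, s ∉ A → h s = 0) ∧
      (φ =ᵐ[volume.restrict A] h) ∧ Integrable h volume := by
  obtain ⟨g, hgm, hgeq⟩ := hφ.aestronglyMeasurable
  refine ⟨A.indicator (fun s => max (g s) 0), (hgm.measurable.max measurable_const).indicator hA,
    fun s => ?_, fun s hs => indicator_of_notMem hs _, ?_, ?_⟩
  · by_cases hs : s ∈ A
    · rw [indicator_of_mem hs]; exact le_max_right _ _
    · rw [indicator_of_notMem hs]
  · filter_upwards [hgeq, hpos, ae_restrict_mem hA] with s h1 h2 h3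
    rw [indicator_of_mem h3, ← h1, max_eq_left h2]
  · have heq : φ =ᵐ[volume.restrict A] A.indicator (fun s => max (g s) 0) := by
      filter_upwards [hgeq, hpos, ae_restrict_mem hA] with s h1 h2 h3
      rw [indicator_of_mem h3, ← h1, max_eq_left h2]
    have hnull : volume ({s | φ s ≠ A.indicator (fun s => max (g s) 0) s} ∩ A) = 0 := by
      rw [← Measure.restrict_apply' hA]
      exact heq
    have hglob : A.indicator φ =ᵐ[volume] A.indicator (fun s => max (g s) 0) := by
      rw [Filter.EventuallyEq, ae_iff]
      refine measure_mono_null ?_ hnull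
      intro s hs
      simp only [mem_setOf_eq] at hs
      by_cases hsA : s ∈ A
      · refine ⟨?_, hsA⟩
        intro hcontra
        exact hs (by rw [indicator_of_mem hsA]; exact hcontra)
      · exact absurd (by rw [indicator_of_notMem hsA, indicator_of_notMem hsA]) hs
    exact (hφ.integrable_indicator hA).congr hglob

lemma rc_pos (T₁ T₂ η : ℝ) (hT : T₁ < T₂) (hη : 0 < η)
    (φ₁ φ₂ : ℝ → ℝ)
    (hφ₁ : IntegrableOn φ₁ (Set.Ioo T₁ (T₂ + η)))
    (hφ₂ : IntegrableOn φ₂ (Set.Ioo 0 (T₂ - T₁ + η)))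
    (hφ₂pos : ∀ᵐ s ∂(volume.restrict (Set.Ioo 0 (T₂ - T₁ + η))), 0 ≤ φ₂ s)
    (hφ₁pos : ∀ᵐ s ∂(volume.restrict (Set.Ioo T₁ (T₂ + η))), 0 ≤ φ₁ s) :
    (∫ s in T₁..T₂, |φ₁ s|) * (∫ s in (0:ℝ)..η, |φ₂ s|) ≤
      ∫ t in T₁..(T₂ + η), |∫ s in T₁..t, φ₁ s * φ₂ (t - s)| := by
  obtain ⟨h₁, m₁, nn₁, supp₁, eq₁, int₁⟩ := rc_nice measurableSet_Ioo hφ₁ hφ₁pos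
  obtain ⟨h₂, m₂, nn₂, supp₂, eq₂, int₂⟩ := rc_nice measurableSet_Ioo hφ₂ hφ₂pos
  set H₁ : ℝ → ENNReal := fun s => ENNReal.ofReal (h₁ s) with hH₁
  set H₂ : ℝ → ENNReal := fun s => ENNReal.ofReal (h₂ s) with hH₂
  have mH₁ : Measurable H₁ := m₁.ennreal_ofReal
  have mH₂ : Measurable H₂ := m₂.ennreal_ofReal
  obtain ⟨hlow, hfin⟩ := rc_core T₁ T₂ η H₁ H₂ mH₁ mH₂
    int₁.lintegral_lt_top.ne int₂.lintegral_lt_top.ne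
  set I' : ℝ → ENNReal := fun t => ∫⁻ s in Ioc T₁ t, H₁ s * H₂ (t - s) with hI'
  -- LHS part 1
  have e₁ : (∫ s in T₁..T₂, |φ₁ s|) = (∫⁻ s in Ioc T₁ T₂, H₁ s).toReal := by
    rw [intervalIntegral.integral_of_le hT.le]
    have hsub : Ioc T₁ T₂ ⊆ Ioo T₁ (T₂ + η) :=
      fun s hs => ⟨hs.1, lt_of_le_of_lt hs.2 (by linarith)⟩
    have hae : ∀ᵐ s ∂(volume.restrict (Ioc T₁ T₂)), |φ₁ s| = h₁ s :=
      ae_restrict_of_ae_restrict_of_subset hsub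
        (by filter_upwards [eq₁, hφ₁pos] with s h hp; rw [abs_of_nonneg hp, h])
    rw [integral_congr_ae hae]
    exact integral_eq_lintegral_of_nonneg_ae (ae_of_all _ nn₁) m₁.aestronglyMeasurable
  have e₂ : (∫ s in (0:ℝ)..η, |φ₂ s|) = (∫⁻ u in Ioc 0 η, H₂ u).toReal := by
    rw [intervalIntegral.integral_of_le hη.le]
    have hsub : Ioc 0 η ⊆ Ioo 0 (T₂ - T₁ + η) :=
      fun s hs => ⟨hs.1, lt_of_le_of_lt hs.2 (by linarith)⟩
    have hae : ∀ᵐ s ∂(volume.restrict (Ioc 0 η)), |φ₂ s| = h₂ s :=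
      ae_restrict_of_ae_restrict_of_subset hsub
        (by filter_upwards [eq₂, hφ₂pos] with s h hp; rw [abs_of_nonneg hp, h])
    rw [integral_congr_ae hae]
    exact integral_eq_lintegral_of_nonneg_ae (ae_of_all _ nn₂) m₂.aestronglyMeasurable
  -- pointwise conversion of the convolution on Ioo
  have hconv : ∀ t ∈ Ioo T₁ (T₂ + η),
      |∫ s in T₁..t, φ₁ s * φ₂ (t - s)| = (I' t).toReal := by
    intro t ht
    have htle : T₁ ≤ t := ht.1.le
    -- φ-conv equals h-conv
    have step1 : (∫ s in T₁..t, φ₁ s * φ₂ (t - s)) = ∫ s in T₁..t, h₁ s * h₂ (t - s) := by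
      rw [intervalIntegral.integral_of_le htle, intervalIntegral.integral_of_le htle]
      apply integral_congr_ae
      have hsub : Ioc T₁ t ⊆ Ioo T₁ (T₂ + η) :=
        fun s hs => ⟨hs.1, lt_of_le_of_lt hs.2 ht.2⟩
      have a1 : ∀ᵐ s ∂(volume.restrict (Ioc T₁ t)), φ₁ s = h₁ s :=
        ae_restrict_of_ae_restrict_of_subset hsub eq₁
      have a2 : ∀ᵐ s ∂(volume.restrict (Ioc T₁ t)), s ∈ Ioc T₁ t → φ₂ (t - s) = h₂ (t - s) := by
        apply ae_restrict_of_ae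
        have hmp : MeasurePreserving (fun s : ℝ => t - s) volume volume := by
          have h1 : (fun s : ℝ => t - s) = (fun y : ℝ => t + y) ∘ (fun s : ℝ => -s) := by
            funext s; simp [sub_eq_add_neg]
          rw [h1]
          exact (measurePreserving_add_left volume t).comp (Measure.measurePreserving_neg volume)
        set B : Set ℝ := {u | φ₂ u ≠ h₂ u} ∩ Ioo 0 (T₂ - T₁ + η) with hB
        have hBnull : volume B = 0 := by
          rw [hB, ← Measure.restrict_apply' measurableSet_Ioo]
          exact eq₂
        have hpre : volume ((fun s : ℝ => t - s) ⁻¹' B) = 0 :=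
          hmp.quasiMeasurePreserving.preimage_null hBnull
        have hEnull : volume (((fun s : ℝ => t - s) ⁻¹' B) ∪ {t}) = 0 :=
          measure_union_null hpre (measure_singleton t)
        rw [ae_iff]
        refine measure_mono_null ?_ hEnull
        intro s hs
        simp only [mem_setOf_eq] at hs
        push_neg at hs
        obtain ⟨hsIoc, hne⟩ := hs
        by_cases hst : s = t
        · exact Or.inr (by simp [hst])
        · left
          refine ⟨hne, ?_, ?_⟩
          · show (0:ℝ) < t - s
            have : s < t := lt_of_le_of_ne hsIoc.2 hst
            linarith
          · show t - s < T₂ - T₁ + η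
            have h1 := hsIoc.1
            have h2 := ht.2
            linarith
      filter_upwards [a1, a2, ae_restrict_mem measurableSet_Ioc] with s h1 h2 h3
      rw [h1, h2 h3]
    -- h-conv is nonneg and equals toReal of I'
    have step2 : (∫ s in T₁..t, h₁ s * h₂ (t - s)) = (I' t).toReal := by
      rw [intervalIntegral.integral_of_le htle]
      have hm : AEStronglyMeasurable (fun s : ℝ => h₁ s * h₂ (t - s))
          (volume.restrict (Ioc T₁ t)) := by
        apply Measurable.aestronglyMeasurable
        exact m₁.mul (m₂.comp (measurable_const.sub measurable_id))
      rw [integral_eq_lintegral_of_nonneg_ae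
        (ae_of_all _ (fun s => mul_nonneg (nn₁ s) (nn₂ _))) hm]
      congr 1
      apply lintegral_congr
      intro s
      exact ENNReal.ofReal_mul (nn₁ s)
    rw [step1, step2, abs_of_nonneg ENNReal.toReal_nonneg]
  -- measurability of I'
  have mI' : Measurable I' := by
    have : I' = fun t => ∫⁻ s, (Ioc T₁ t).indicator (fun s => H₁ s * H₂ (t - s)) s := by
      funext t
      rw [lintegral_indicator measurableSet_Ioc]
    rw [this]
    apply Measurable.lintegral_prod_right (f := fun t s =>
      (Ioc T₁ t).indicator (fun s => H₁ s * H₂ (t - s)) s)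
    have hSet : MeasurableSet {p : ℝ × ℝ | T₁ < p.2 ∧ p.2 ≤ p.1} :=
      (measurableSet_lt measurable_const measurable_snd).inter
        (measurableSet_le measurable_snd measurable_fst)
    have : (Function.uncurry fun t s => (Ioc T₁ t).indicator (fun s => H₁ s * H₂ (t - s)) s)
        = {p : ℝ × ℝ | T₁ < p.2 ∧ p.2 ≤ p.1}.indicator (fun p => H₁ p.2 * H₂ (p.1 - p.2)) := by
      funext p
      rcases p with ⟨t, s⟩
      simp only [Function.uncurry]
      by_cases hs : s ∈ Ioc T₁ t
      · rw [indicator_of_mem hs, indicator_of_mem (by exact ⟨hs.1, hs.2⟩)]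
      · rw [indicator_of_notMem hs, indicator_of_notMem (by intro h; exact hs ⟨h.1, h.2⟩)]
    rw [this]
    exact ((mH₁.comp measurable_snd).mul (mH₂.comp (measurable_fst.sub measurable_snd))).indicator hSet
  -- RHS conversion
  have eR : (∫ t in T₁..(T₂ + η), |∫ s in T₁..t, φ₁ s * φ₂ (t - s)|)
      = (∫⁻ t in Ioc T₁ (T₂ + η), I' t).toReal := by
    rw [intervalIntegral.integral_of_le (by linarith : T₁ ≤ T₂ + η)]
    rw [← Measure.restrict_congr_set Ioo_ae_eq_Ioc]
    rw [setIntegral_congr_fun measurableSet_Ioo (fun t ht => hconv t ht)]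
    rw [Measure.restrict_congr_set Ioo_ae_eq_Ioc]
    exact integral_toReal mI'.aemeasurable (ae_lt_top mI' hfin.ne)
  rw [e₁, e₂, eR, ← ENNReal.toReal_mul]
  exact ENNReal.toReal_mono hfin.ne hlow

theorem reverse_convolution_ineq_a (T₁ T₂ η : ℝ) (hT₁ : 0 ≤ T₁) (hT : T₁ < T₂) (hη : 0 < η)
    (φ₁ φ₂ : ℝ → ℝ)
    (hφ₁ : IntegrableOn φ₁ (Set.Ioo T₁ (T₂ + η)))
    (hφ₂ : IntegrableOn φ₂ (Set.Ioo 0 (T₂ - T₁ + η)))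
    (hφ₂pos : ∀ᵐ s ∂(volume.restrict (Set.Ioo 0 (T₂ - T₁ + η))), 0 ≤ φ₂ s)
    (hsign : (∀ᵐ s ∂(volume.restrict (Set.Ioo T₁ (T₂ + η))), 0 ≤ φ₁ s) ∨
             (∀ᵐ s ∂(volume.restrict (Set.Ioo T₁ (T₂ + η))), φ₁ s ≤ 0)) :
    (∫ s in T₁..T₂, |φ₁ s|) * (∫ s in (0:ℝ)..η, |φ₂ s|) ≤
      ∫ t in T₁..(T₂ + η), |∫ s in T₁..t, φ₁ s * φ₂ (t - s)| := by
  rcases hsign with hpos | hneg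
  · exact rc_pos T₁ T₂ η hT hη φ₁ φ₂ hφ₁ hφ₂ hφ₂pos hpos
  · have key := rc_pos T₁ T₂ η hT hη (fun s => -φ₁ s) φ₂ hφ₁.neg hφ₂ hφ₂pos
      (by filter_upwards [hneg] with s h; simpa using h)
    simpa [neg_mul, intervalIntegral.integral_neg, abs_neg] using key
end

section
/- Let 0 ≤ T₁ < T₂ < ∞ and η > 0. Suppose φ₁ ∈ L¹(T₁, T₂+η), φ₂ ∈ L¹(0, T₂−T₁+η), φ₂ ≥ 0 on (0, T₂−T₁+η), and φ₁ keeps a constant sign on (T₁, T₂) (but not necessarily on (T₂, T₂+η)). Then ‖φ₁‖_{L¹(T₁,T₂)} ‖φ₂‖_{L¹(0,η)} ≤ ‖ t ↦ ∫_{T₁}^t φ₁(s) φ₂(t−s) ds ‖_{L¹(T₁,T₂+η)} + 2 ‖φ₁‖_{L¹(T₂,T₂+η)} ‖φ₂‖_{L¹(0,η)}. -/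
open MeasureTheory

private lemma key_aux (T₁ T₂ η : ℝ) (hT : T₁ < T₂) (hη : 0 < η)
    (φ₁ φ₂ : ℝ → ℝ)
    (hφ₁ : IntegrableOn φ₁ (Set.Ioo T₁ (T₂ + η)))
    (hφ₂ : IntegrableOn φ₂ (Set.Ioo 0 (T₂ - T₁ + η)))
    (hφ₂pos : ∀ᵐ s ∂(volume.restrict (Set.Ioo 0 (T₂ - T₁ + η))), 0 ≤ φ₂ s)
    (hpos : ∀ᵐ s ∂(volume.restrict (Set.Ioo T₁ T₂)), 0 ≤ φ₁ s) :
    (∫ s in T₁..T₂, |φ₁ s|) * (∫ s in (0:ℝ)..η, |φ₂ s|) ≤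
      (∫ t in T₁..(T₂ + η), |∫ s in T₁..t, φ₁ s * φ₂ (t - s)|) +
        (∫ s in T₂..(T₂ + η), |φ₁ s|) * (∫ s in (0:ℝ)..η, |φ₂ s|) := by
  have hT' : η < T₂ - T₁ + η := by linarith
  set I : Set ℝ := Set.Ioo T₁ (T₂ + η) with hIdef
  set ψ₁ : ℝ → ℝ := I.indicator φ₁ with hψ₁def
  set ψ₂ : ℝ → ℝ := (Set.Ioo 0 (T₂ - T₁ + η)).indicator φ₂ with hψ₂def
  set χ : ℝ → ℝ := (Set.Ioo T₁ T₂).indicator φ₁ with hχdef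
  set ρ : ℝ → ℝ := (Set.Ico T₂ (T₂ + η)).indicator φ₁ with hρdef
  have hψ₁i : Integrable ψ₁ := (integrable_indicator_iff measurableSet_Ioo).2 hφ₁
  have hψ₂i : Integrable ψ₂ := (integrable_indicator_iff measurableSet_Ioo).2 hφ₂
  have hsub1 : Set.Ioo T₁ T₂ ⊆ I := Set.Ioo_subset_Ioo le_rfl (by linarith)
  have hsub2 : Set.Ico T₂ (T₂ + η) ⊆ I := fun x hx => ⟨lt_of_lt_of_le hT hx.1, hx.2⟩
  have hχi : Integrable χ := (integrable_indicator_iff measurableSet_Ioo).2 (hφ₁.mono_set hsub1)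
  have hρi : Integrable ρ := (integrable_indicator_iff measurableSet_Ico).2 (hφ₁.mono_set hsub2)
  have hsplit : ∀ s, ψ₁ s = χ s + ρ s := by
    intro s
    have hU : Set.Ioo T₁ T₂ ∪ Set.Ico T₂ (T₂ + η) = I := Set.Ioo_union_Ico_eq_Ioo hT (by linarith)
    have hD : Disjoint (Set.Ioo T₁ T₂) (Set.Ico T₂ (T₂ + η)) :=
      Set.disjoint_left.2 fun x hx hx' => absurd hx.2 (not_lt.2 hx'.1)
    rw [hψ₁def, hχdef, hρdef, ← hU, Set.indicator_union_of_disjoint hD]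
  -- product integrability
  have hk : Integrable (fun p : ℝ × ℝ => ψ₁ p.2 * ψ₂ (p.1 - p.2)) (volume.prod volume) := by
    simpa using hψ₁i.convolution_integrand (ContinuousLinearMap.mul ℝ ℝ) hψ₂i
  have hkχ : Integrable (fun p : ℝ × ℝ => χ p.2 * ψ₂ (p.1 - p.2)) (volume.prod volume) := by
    simpa using hχi.convolution_integrand (ContinuousLinearMap.mul ℝ ℝ) hψ₂i
  have hkρ : Integrable (fun p : ℝ × ℝ => ρ p.2 * ψ₂ (p.1 - p.2)) (volume.prod volume) := by
    simpa using hρi.convolution_integrand (ContinuousLinearMap.mul ℝ ℝ) hψ₂i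
  have hprodres : (volume.restrict I).prod (volume : Measure ℝ)
      = ((volume : Measure ℝ).prod volume).restrict (I ×ˢ Set.univ) := by
    have := Measure.prod_restrict (μ := (volume : Measure ℝ)) (ν := (volume : Measure ℝ))
      I Set.univ
    rwa [Measure.restrict_univ] at this
  have hkI : Integrable (fun p : ℝ × ℝ => ψ₁ p.2 * ψ₂ (p.1 - p.2))
      ((volume.restrict I).prod volume) := by rw [hprodres]; exact hk.restrict
  have hkχI : Integrable (fun p : ℝ × ℝ => χ p.2 * ψ₂ (p.1 - p.2))
      ((volume.restrict I).prod volume) := by rw [hprodres]; exact hkχ.restrict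
  have hkρI : Integrable (fun p : ℝ × ℝ => ρ p.2 * ψ₂ (p.1 - p.2))
      ((volume.restrict I).prod volume) := by rw [hprodres]; exact hkρ.restrict
  set Φ : ℝ → ℝ := fun t => ∫ s, ψ₁ s * ψ₂ (t - s) with hΦdef
  set G : ℝ → ℝ := fun t => ∫ s, χ s * ψ₂ (t - s) with hGdef
  set H : ℝ → ℝ := fun t => ∫ s, ρ s * ψ₂ (t - s) with hHdef
  have hΦint : Integrable Φ (volume.restrict I) := hkI.integral_prod_left
  have hGint : Integrable G (volume.restrict I) := hkχI.integral_prod_left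
  have hHint : Integrable H (volume.restrict I) := hkρI.integral_prod_left
  -- positivity facts
  have hψ₂pos : ∀ᵐ u, 0 ≤ ψ₂ u := by
    filter_upwards [(ae_restrict_iff' measurableSet_Ioo).1 hφ₂pos] with u hu
    by_cases hmem : u ∈ Set.Ioo (0:ℝ) (T₂ - T₁ + η)
    · rw [hψ₂def, Set.indicator_of_mem hmem]; exact hu hmem
    · rw [hψ₂def, Set.indicator_of_notMem hmem]
  have hχpos : ∀ᵐ s, 0 ≤ χ s := by
    filter_upwards [(ae_restrict_iff' measurableSet_Ioo).1 hpos] with s hs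
    by_cases hmem : s ∈ Set.Ioo T₁ T₂
    · rw [hχdef, Set.indicator_of_mem hmem]; exact hs hmem
    · rw [hχdef, Set.indicator_of_notMem hmem]
  -- the interval integral equals Φ on I
  have hFΦ : ∀ t ∈ I, (∫ s in T₁..t, φ₁ s * φ₂ (t - s)) = Φ t := by
    intro t ht
    rw [intervalIntegral.integral_of_le ht.1.le, ← integral_indicator measurableSet_Ioc]
    apply integral_congr_ae
    have hne : ∀ᵐ (s : ℝ), s ≠ t := by
      rw [ae_iff]
      have h : {s : ℝ | ¬ s ≠ t} = {t} := by ext s; simp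
      rw [h]; exact measure_singleton t
    filter_upwards [hne] with s hs
    by_cases hmem : s ∈ Set.Ioc T₁ t
    · have hst : s < t := lt_of_le_of_ne hmem.2 hs
      have h1 : s ∈ I := ⟨hmem.1, hst.trans ht.2⟩
      have h2 : t - s ∈ Set.Ioo (0:ℝ) (T₂ - T₁ + η) :=
        ⟨by linarith, by have h3 := ht.2; have h4 := hmem.1; linarith⟩
      rw [Set.indicator_of_mem hmem, hψ₁def, hψ₂def,
        Set.indicator_of_mem h1, Set.indicator_of_mem h2]
    · rw [Set.indicator_of_notMem hmem]
      have h' : s ≤ T₁ ∨ t < s := by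
        by_contra hc
        push_neg at hc
        exact hmem ⟨hc.1, hc.2⟩
      rcases h' with h | h
      · have hz : ψ₁ s = 0 := by
          rw [hψ₁def, Set.indicator_of_notMem]
          intro hmem'; exact absurd hmem'.1 (not_lt.2 h)
        rw [hz, zero_mul]
      · have hz : ψ₂ (t - s) = 0 := by
          rw [hψ₂def, Set.indicator_of_notMem]
          intro hmem'; have := hmem'.1; linarith
        rw [hz, mul_zero]
  have hΦGH : ∀ᵐ t ∂(volume.restrict I), Φ t = G t + H t := by
    filter_upwards [hkχI.prod_right_ae, hkρI.prod_right_ae] with t h1 h2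
    have heq : (fun s => ψ₁ s * ψ₂ (t - s))
        = fun s => χ s * ψ₂ (t - s) + ρ s * ψ₂ (t - s) := by
      funext s; rw [hsplit s]; ring
    rw [hΦdef, hGdef, hHdef]
    simp only []
    rw [heq, integral_add h1 h2]
  -- abbreviations for the final quantities
  set B : ℝ := ∫ u in Set.Ioo (0:ℝ) η, |φ₂ u| with hBdef
  set A : ℝ := ∫ s, χ s with hAdef
  set C : ℝ := ∫ s, |ρ s| with hCdef
  -- lower bound for the inner integral in G
  have hBψ : (∫ u in (0:ℝ)..η, ψ₂ u) = B := by
    rw [intervalIntegral.integral_of_le hη.le, integral_Ioc_eq_integral_Ioo, hBdef]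
    apply setIntegral_congr_ae measurableSet_Ioo
    have hmono := ae_restrict_of_ae_restrict_of_subset
      (Set.Ioo_subset_Ioo le_rfl hT'.le) hφ₂pos
    filter_upwards [(ae_restrict_iff' measurableSet_Ioo).1 hmono] with u hu hmem
    have hmem' : u ∈ Set.Ioo (0:ℝ) (T₂ - T₁ + η) := ⟨hmem.1, hmem.2.trans hT'⟩
    rw [hψ₂def, Set.indicator_of_mem hmem', abs_of_nonneg (hu hmem)]
  have hW : ∀ s ∈ Set.Ioo T₁ T₂, B ≤ ∫ t in I, ψ₂ (t - s) := by
    intro s hs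
    have h1 : (∫ t in I, ψ₂ (t - s)) = ∫ u in (T₁ - s)..(T₂ + η - s), ψ₂ u := by
      rw [hIdef, ← integral_Ioc_eq_integral_Ioo,
        ← intervalIntegral.integral_of_le (by linarith : T₁ ≤ T₂ + η),
        intervalIntegral.integral_comp_sub_right]
    rw [h1, ← hBψ]
    exact intervalIntegral.integral_mono_interval (by linarith [hs.1]) hη.le
      (by linarith [hs.2]) (ae_restrict_of_ae hψ₂pos) (hψ₂i.intervalIntegrable)
  -- ∫ G ≥ A * B
  have hGswap : (∫ t in I, G t) = ∫ s, χ s * ∫ t in I, ψ₂ (t - s) := by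
    have := integral_integral_swap (f := fun (t s : ℝ) => χ s * ψ₂ (t - s))
      (μ := volume.restrict I) (ν := volume) hkχI
    simpa [integral_const_mul] using this
  have hABG : A * B ≤ ∫ t in I, G t := by
    rw [hGswap]
    have hle : ∀ᵐ s, χ s * B ≤ χ s * ∫ t in I, ψ₂ (t - s) := by
      filter_upwards [hχpos] with s h0
      by_cases hmem : s ∈ Set.Ioo T₁ T₂
      · exact mul_le_mul_of_nonneg_left (hW s hmem) h0
      · rw [hχdef, Set.indicator_of_notMem hmem, zero_mul, zero_mul]
    have hint1 : Integrable (fun s => χ s * B) := hχi.mul_const B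
    have hint2 : Integrable (fun s => χ s * ∫ t in I, ψ₂ (t - s)) := by
      have := hkχI.integral_prod_right
      simpa [integral_const_mul] using this
    calc A * B = ∫ s, χ s * B := by rw [integral_mul_const]
      _ ≤ _ := integral_mono_ae hint1 hint2 hle
  -- ∫ |H| ≤ C * B
  have habsψ : (fun u => |ψ₂ u|) = (Set.Ioo 0 (T₂ - T₁ + η)).indicator (fun u => |φ₂ u|) := by
    funext u
    by_cases h : u ∈ Set.Ioo (0:ℝ) (T₂ - T₁ + η)
    · rw [hψ₂def, Set.indicator_of_mem h, Set.indicator_of_mem h]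
    · rw [hψ₂def, Set.indicator_of_notMem h, Set.indicator_of_notMem h, abs_zero]
  have hφ₂Ioc : IntegrableOn (fun u => |φ₂ u|) (Set.Ioc (0:ℝ) η) := by
    have : Set.Ioc (0:ℝ) η ⊆ Set.Ioo 0 (T₂ - T₁ + η) :=
      fun u hu => ⟨hu.1, lt_of_le_of_lt hu.2 hT'⟩
    exact (hφ₂.mono_set this).abs
  have hV : ∀ s, |ρ s| * (∫ t in I, |ψ₂ (t - s)|) ≤ |ρ s| * B := by
    intro s
    by_cases hmem : s ∈ Set.Ico T₂ (T₂ + η)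
    · refine mul_le_mul_of_nonneg_left ?_ (abs_nonneg _)
      have h1 : (∫ t in I, |ψ₂ (t - s)|) = ∫ u in (T₁ - s)..(T₂ + η - s), |ψ₂ u| := by
        rw [hIdef, ← integral_Ioc_eq_integral_Ioo,
          ← intervalIntegral.integral_of_le (by linarith : T₁ ≤ T₂ + η)]
        exact intervalIntegral.integral_comp_sub_right (fun u => |ψ₂ u|) s
      rw [h1, intervalIntegral.integral_of_le (by linarith : T₁ - s ≤ T₂ + η - s),
        habsψ, setIntegral_indicator measurableSet_Ioo]
      have hsub : Set.Ioc (T₁ - s) (T₂ + η - s) ∩ Set.Ioo 0 (T₂ - T₁ + η)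
          ⊆ Set.Ioc (0:ℝ) η := by
        rintro u ⟨h1', h2'⟩
        exact ⟨h2'.1, le_trans h1'.2 (by linarith [hmem.1])⟩
      have hle := setIntegral_mono_set hφ₂Ioc
        (ae_restrict_of_ae (Filter.Eventually.of_forall fun u => abs_nonneg _))
        hsub.eventuallyLE
      rw [hBdef, ← integral_Ioc_eq_integral_Ioo]
      exact hle
    · rw [hρdef, Set.indicator_of_notMem hmem, abs_zero, zero_mul, zero_mul]
  have hHabs : (∫ t in I, |H t|) ≤ ∫ t in I, ∫ s, |ρ s| * |ψ₂ (t - s)| := by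
    have hJint : Integrable (fun t => ∫ s, |ρ s| * |ψ₂ (t - s)|) (volume.restrict I) := by
      have := hkρI.norm.integral_prod_left
      simpa [Real.norm_eq_abs, abs_mul] using this
    refine integral_mono hHint.abs hJint fun t => ?_
    have := norm_integral_le_integral_norm (fun s => ρ s * ψ₂ (t - s)) (μ := volume)
    simpa [Real.norm_eq_abs, abs_mul, hHdef] using this
  have hJswap : (∫ t in I, ∫ s, |ρ s| * |ψ₂ (t - s)|)
      = ∫ s, |ρ s| * ∫ t in I, |ψ₂ (t - s)| := by
    have hint : Integrable (fun p : ℝ × ℝ => |ρ p.2| * |ψ₂ (p.1 - p.2)|)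
        ((volume.restrict I).prod volume) := by
      have := hkρI.norm
      simpa [Real.norm_eq_abs, abs_mul] using this
    have := integral_integral_swap (f := fun (t s : ℝ) => |ρ s| * |ψ₂ (t - s)|)
      (μ := volume.restrict I) (ν := volume) hint
    simpa [integral_const_mul] using this
  have hHC : (∫ t in I, |H t|) ≤ C * B := by
    have hint3 : Integrable (fun s => |ρ s| * ∫ t in I, |ψ₂ (t - s)|) := by
      have hint : Integrable (fun p : ℝ × ℝ => |ρ p.2| * |ψ₂ (p.1 - p.2)|)
          ((volume.restrict I).prod volume) := by
        have := hkρI.norm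
        simpa [Real.norm_eq_abs, abs_mul] using this
      have := hint.integral_prod_right
      simpa [integral_const_mul] using this
    have hint4 : Integrable (fun s => |ρ s| * B) := hρi.abs.mul_const B
    calc (∫ t in I, |H t|) ≤ ∫ t in I, ∫ s, |ρ s| * |ψ₂ (t - s)| := hHabs
      _ = ∫ s, |ρ s| * ∫ t in I, |ψ₂ (t - s)| := hJswap
      _ ≤ ∫ s, |ρ s| * B := integral_mono hint3 hint4 hV
      _ = C * B := by rw [integral_mul_const]
  -- main pointwise bound and integration
  have hFint : Integrable (fun t => |∫ s in T₁..t, φ₁ s * φ₂ (t - s)|) (volume.restrict I) := by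
    apply hΦint.abs.congr
    filter_upwards [ae_restrict_mem measurableSet_Ioo] with t ht
    rw [hFΦ t ht]
  have hFabs : ∀ᵐ t ∂(volume.restrict I),
      G t - |H t| ≤ |∫ s in T₁..t, φ₁ s * φ₂ (t - s)| := by
    filter_upwards [hΦGH, ae_restrict_mem measurableSet_Ioo] with t hGH ht
    rw [hFΦ t ht, hGH]
    have h1 := le_abs_self (G t + H t)
    have h2 := neg_abs_le (H t)
    linarith
  have hmain : (∫ t in I, G t) - (∫ t in I, |H t|)
      ≤ ∫ t in I, |∫ s in T₁..t, φ₁ s * φ₂ (t - s)| := by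
    rw [← integral_sub hGint hHint.abs]
    exact integral_mono_ae (hGint.sub hHint.abs) hFint hFabs
  -- endpoint conversions
  have e1 : (∫ s in T₁..T₂, |φ₁ s|) = A := by
    rw [intervalIntegral.integral_of_le hT.le, integral_Ioc_eq_integral_Ioo,
      hAdef, hχdef, integral_indicator measurableSet_Ioo]
    apply setIntegral_congr_ae measurableSet_Ioo
    filter_upwards [(ae_restrict_iff' measurableSet_Ioo).1 hpos] with s hs hmem
    exact abs_of_nonneg (hs hmem)
  have e2 : (∫ s in (0:ℝ)..η, |φ₂ s|) = B := by
    rw [intervalIntegral.integral_of_le hη.le, integral_Ioc_eq_integral_Ioo, hBdef]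
  have e3 : (∫ s in T₂..(T₂ + η), |φ₁ s|) = C := by
    have habsρ : (fun s => |ρ s|) = (Set.Ico T₂ (T₂ + η)).indicator (fun s => |φ₁ s|) := by
      funext s
      by_cases h : s ∈ Set.Ico T₂ (T₂ + η)
      · rw [hρdef, Set.indicator_of_mem h, Set.indicator_of_mem h]
      · rw [hρdef, Set.indicator_of_notMem h, Set.indicator_of_notMem h, abs_zero]
    rw [intervalIntegral.integral_of_le (by linarith : T₂ ≤ T₂ + η),
      integral_Ioc_eq_integral_Ioo, hCdef, habsρ, integral_indicator measurableSet_Ico,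
      integral_Ico_eq_integral_Ioo]
  have e4 : (∫ t in T₁..(T₂ + η), |∫ s in T₁..t, φ₁ s * φ₂ (t - s)|)
      = ∫ t in I, |∫ s in T₁..t, φ₁ s * φ₂ (t - s)| := by
    rw [intervalIntegral.integral_of_le (by linarith : T₁ ≤ T₂ + η),
      integral_Ioc_eq_integral_Ioo, hIdef]
  rw [e1, e2, e3, e4]
  linarith [hABG, hHC, hmain]

theorem reverse_convolution_ineq_b (T₁ T₂ η : ℝ) (hT₁ : 0 ≤ T₁) (hT : T₁ < T₂) (hη : 0 < η)
    (φ₁ φ₂ : ℝ → ℝ)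
    (hφ₁ : IntegrableOn φ₁ (Set.Ioo T₁ (T₂ + η)))
    (hφ₂ : IntegrableOn φ₂ (Set.Ioo 0 (T₂ - T₁ + η)))
    (hφ₂pos : ∀ᵐ s ∂(volume.restrict (Set.Ioo 0 (T₂ - T₁ + η))), 0 ≤ φ₂ s)
    (hsign : (∀ᵐ s ∂(volume.restrict (Set.Ioo T₁ T₂)), 0 ≤ φ₁ s) ∨
             (∀ᵐ s ∂(volume.restrict (Set.Ioo T₁ T₂)), φ₁ s ≤ 0)) :
    (∫ s in T₁..T₂, |φ₁ s|) * (∫ s in (0:ℝ)..η, |φ₂ s|) ≤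
      (∫ t in T₁..(T₂ + η), |∫ s in T₁..t, φ₁ s * φ₂ (t - s)|) +
        2 * (∫ s in T₂..(T₂ + η), |φ₁ s|) * (∫ s in (0:ℝ)..η, |φ₂ s|) := by
  have hB : 0 ≤ ∫ s in (0:ℝ)..η, |φ₂ s| :=
    intervalIntegral.integral_nonneg hη.le fun u _ => abs_nonneg _
  have hC : 0 ≤ ∫ s in T₂..(T₂ + η), |φ₁ s| :=
    intervalIntegral.integral_nonneg (by linarith) fun u _ => abs_nonneg _
  rcases hsign with hpos | hneg
  · have key := key_aux T₁ T₂ η hT hη φ₁ φ₂ hφ₁ hφ₂ hφ₂pos hpos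
    nlinarith [mul_nonneg hC hB]
  · have key := key_aux T₁ T₂ η hT hη (fun s => -φ₁ s) φ₂ hφ₁.neg hφ₂ hφ₂pos
      (by filter_upwards [hneg] with s h; simpa using h)
    simp only [neg_mul, intervalIntegral.integral_neg, abs_neg] at key
    nlinarith [mul_nonneg hC hB]
end

section
/- Let T > 0, η ∈ (0,T), and let g, v, E : measurable functions with g ∈ L¹(0,T), v ∈ L¹(0,T), v ≥ 0 a.e., g of constant sign on (0,T), and suppose E(t) = ∫₀^t g(τ) v(t−τ) dτ for a.e. t ∈ (0,T). If ‖v‖_{L¹(0,η)} > 0, then ‖g‖_{L¹(0,T−η)} ≤ ‖v‖_{L¹(0,η)}^{−1} ‖E‖_{L¹(0,T)}. -/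
open MeasureTheory

theorem g1_L1_bound (T η : ℝ) (hη : 0 < η) (hηT : η < T)
    (g v E : ℝ → ℝ)
    (hg : IntegrableOn g (Set.Ioo 0 T))
    (hv : IntegrableOn v (Set.Ioo 0 T))
    (hv0 : ∀ᵐ s ∂(volume.restrict (Set.Ioo 0 T)), 0 ≤ v s)
    (hsign : (∀ᵐ s ∂(volume.restrict (Set.Ioo 0 T)), 0 ≤ g s) ∨
             (∀ᵐ s ∂(volume.restrict (Set.Ioo 0 T)), g s ≤ 0))
    (hE : ∀ᵐ t ∂(volume.restrict (Set.Ioo 0 T)),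
      E t = ∫ τ in (0:ℝ)..t, g τ * v (t - τ))
    (hvpos : 0 < ∫ τ in (0:ℝ)..η, |v τ|) :
    (∫ τ in (0:ℝ)..(T - η), |g τ|) ≤
      (∫ τ in (0:ℝ)..η, |v τ|)⁻¹ * ∫ t in (0:ℝ)..T, |E t| := by
  have hT0 : (0:ℝ) < T := hη.trans hηT
  set G : ℝ → ℝ := (Set.Ioo (0:ℝ) T).indicator (fun τ => |g τ|) with hGdef
  set V : ℝ → ℝ := (Set.Ioo (0:ℝ) T).indicator (fun τ => |v τ|) with hVdef
  have hG0 : ∀ τ, 0 ≤ G τ := fun τ => Set.indicator_nonneg (fun x _ => abs_nonneg _) τ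
  have hV0 : ∀ τ, 0 ≤ V τ := fun τ => Set.indicator_nonneg (fun x _ => abs_nonneg _) τ
  have hGint : Integrable G := (integrable_indicator_iff measurableSet_Ioo).2 hg.abs
  have hVint : Integrable V := (integrable_indicator_iff measurableSet_Ioo).2 hv.abs
  -- sign of g
  obtain ⟨ε, hε1, hgε⟩ : ∃ ε : ℝ, |ε| = 1 ∧
      ∀ᵐ τ ∂(volume.restrict (Set.Ioo 0 T)), g τ = ε * |g τ| := by
    rcases hsign with h | h
    · exact ⟨1, abs_one, h.mono fun τ hτ => by rw [abs_of_nonneg hτ, one_mul]⟩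
    · exact ⟨-1, by norm_num, h.mono fun τ hτ => by rw [abs_of_nonpos hτ]; ring⟩
  have hgε' : ∀ᵐ τ : ℝ, τ ∈ Set.Ioo (0:ℝ) T → g τ = ε * |g τ| := ae_imp_of_ae_restrict hgε
  have hv0' : ∀ᵐ s : ℝ, s ∈ Set.Ioo (0:ℝ) T → v s = |v s| :=
    ae_imp_of_ae_restrict (hv0.mono fun s hs => (abs_of_nonneg hs).symm)
  -- key pointwise formula
  have hKey : ∀ᵐ t ∂(volume.restrict (Set.Ioo 0 T)),
      |E t| = ∫ τ, G τ * V (t - τ) := by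
    filter_upwards [hE, ae_restrict_mem measurableSet_Ioo] with t hEt ht
    have hvt : ∀ᵐ τ : ℝ, (t - τ) ∈ Set.Ioo (0:ℝ) T → v (t - τ) = |v (t - τ)| :=
      (quasiMeasurePreserving_sub_left_of_right_invariant volume t).ae hv0'
    have ht0 : (0:ℝ) ≤ t := ht.1.le
    have e1 : E t = ∫ τ in Set.Ioo (0:ℝ) t, g τ * v (t - τ) := by
      rw [hEt, intervalIntegral.integral_of_le ht0, integral_Ioc_eq_integral_Ioo]
    have e2 : (∫ τ in Set.Ioo (0:ℝ) t, g τ * v (t - τ))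
        = ∫ τ in Set.Ioo (0:ℝ) t, ε * (G τ * V (t - τ)) := by
      refine setIntegral_congr_ae measurableSet_Ioo ?_
      filter_upwards [hgε', hvt] with τ h1 h2 hτ
      have hτT : τ ∈ Set.Ioo (0:ℝ) T := ⟨hτ.1, hτ.2.trans ht.2⟩
      have htτ : t - τ ∈ Set.Ioo (0:ℝ) T := ⟨sub_pos.2 hτ.2, by
        have := ht.2; have := hτ.1; linarith⟩
      have hg1 : g τ = ε * |g τ| := h1 hτT
      have hv1 : v (t - τ) = |v (t - τ)| := h2 htτ
      rw [hGdef, hVdef]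
      simp only [Set.indicator_of_mem hτT, Set.indicator_of_mem htτ]
      conv_lhs => rw [hg1, hv1]
      ring
    have e3 : (∫ τ in Set.Ioo (0:ℝ) t, G τ * V (t - τ)) = ∫ τ, G τ * V (t - τ) := by
      rw [← integral_indicator measurableSet_Ioo]
      congr 1; funext τ
      by_cases hτ : τ ∈ Set.Ioo (0:ℝ) t
      · rw [Set.indicator_of_mem hτ]
      · rw [Set.indicator_of_notMem hτ]
        by_cases h0 : 0 < τ
        · have hτt : t ≤ τ := by
            by_contra hc; exact hτ ⟨h0, lt_of_not_ge hc⟩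
          have : V (t - τ) = 0 := by
            rw [hVdef, Set.indicator_of_notMem]
            intro hmem; exact absurd hmem.1 (by linarith)
          rw [this, mul_zero]
        · have : G τ = 0 := by
            rw [hGdef, Set.indicator_of_notMem]
            intro hmem; exact h0 hmem.1
          rw [this, zero_mul]
    have hnn : 0 ≤ ∫ τ, G τ * V (t - τ) :=
      integral_nonneg fun τ => mul_nonneg (hG0 τ) (hV0 _)
    calc |E t| = |ε * ∫ τ in Set.Ioo (0:ℝ) t, G τ * V (t - τ)| := by
          rw [e1, e2, integral_const_mul]
      _ = |∫ τ in Set.Ioo (0:ℝ) t, G τ * V (t - τ)| := by rw [abs_mul, hε1, one_mul]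
      _ = ∫ τ, G τ * V (t - τ) := by rw [e3, abs_of_nonneg hnn]
  -- integrability of the convolution integrand
  have hΦ : Integrable (fun p : ℝ × ℝ => G p.2 * V (p.1 - p.2)) (volume.prod volume) := by
    simpa using hGint.convolution_integrand (ContinuousLinearMap.mul ℝ ℝ) hVint
  have hprodeq : (volume.restrict (Set.Ioo (0:ℝ) T)).prod (volume : Measure ℝ)
      = ((volume : Measure ℝ).prod volume).restrict ((Set.Ioo (0:ℝ) T) ×ˢ Set.univ) := by
    rw [← Measure.prod_restrict, Measure.restrict_univ]
  have hΦr : Integrable (fun p : ℝ × ℝ => G p.2 * V (p.1 - p.2))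
      ((volume.restrict (Set.Ioo (0:ℝ) T)).prod volume) := by
    rw [hprodeq]; exact hΦ.restrict
  -- swap
  have hswap : (∫ t in Set.Ioo (0:ℝ) T, ∫ τ, G τ * V (t - τ))
      = ∫ τ, ∫ t in Set.Ioo (0:ℝ) T, G τ * V (t - τ) :=
    integral_integral_swap hΦr
  -- inner integral rewrite
  have hinner : ∀ τ : ℝ, (∫ t in Set.Ioo (0:ℝ) T, G τ * V (t - τ))
      = G τ * ∫ s in (-τ)..(T - τ), V s := by
    intro τ
    rw [integral_const_mul]
    congr 1
    rw [← integral_Ioc_eq_integral_Ioo, ← intervalIntegral.integral_of_le hT0.le,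
      intervalIntegral.integral_comp_sub_right (fun s => V s) τ, zero_sub]
  -- the comparison function
  set c : ℝ := ∫ s in (0:ℝ)..η, V s with hcdef
  set ψ : ℝ → ℝ := (Set.Ioo (0:ℝ) (T - η)).indicator (fun τ => |g τ| * c) with hψdef
  have hVii : ∀ a b : ℝ, IntervalIntegrable V volume a b := fun a b =>
    hVint.intervalIntegrable
  have hc0 : 0 ≤ c := intervalIntegral.integral_nonneg hη.le fun s _ => hV0 s
  have hψint : Integrable ψ := by
    rw [hψdef, integrable_indicator_iff measurableSet_Ioo]
    exact Integrable.mul_const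
      (IntegrableOn.mono_set hg.abs (Set.Ioo_subset_Ioo le_rfl (by linarith))) c
  have hHint : Integrable (fun τ => ∫ t in Set.Ioo (0:ℝ) T, G τ * V (t - τ)) :=
    hΦr.integral_prod_right
  have hle : ∀ τ, ψ τ ≤ ∫ t in Set.Ioo (0:ℝ) T, G τ * V (t - τ) := by
    intro τ
    rw [hinner τ]
    by_cases hτ : τ ∈ Set.Ioo (0:ℝ) (T - η)
    · rw [hψdef, Set.indicator_of_mem hτ]
      have hmem : τ ∈ Set.Ioo (0:ℝ) T := Set.mem_Ioo.mpr ⟨hτ.1, by linarith [hτ.2]⟩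
      have hGτ : G τ = |g τ| := by
        rw [hGdef, Set.indicator_of_mem hmem]
      rw [hGτ]
      refine mul_le_mul_of_nonneg_left ?_ (abs_nonneg _)
      refine intervalIntegral.integral_mono_interval (by linarith [hτ.1]) hη.le
        (by linarith [hτ.2]) ?_ (hVii _ _)
      exact Filter.Eventually.of_forall fun s => hV0 s
    · rw [hψdef, Set.indicator_of_notMem hτ]
      exact mul_nonneg (hG0 τ)
        (intervalIntegral.integral_nonneg (by linarith) fun s _ => hV0 s)
  have hψval : (∫ τ, ψ τ) = (∫ τ in Set.Ioo (0:ℝ) (T - η), |g τ|) * c := by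
    rw [hψdef, integral_indicator measurableSet_Ioo, integral_mul_const]
  -- assemble
  have hmain : (∫ τ in Set.Ioo (0:ℝ) (T - η), |g τ|) * c ≤ ∫ t in Set.Ioo (0:ℝ) T, |E t| := by
    calc (∫ τ in Set.Ioo (0:ℝ) (T - η), |g τ|) * c = ∫ τ, ψ τ := hψval.symm
      _ ≤ ∫ τ, ∫ t in Set.Ioo (0:ℝ) T, G τ * V (t - τ) :=
          integral_mono hψint hHint hle
      _ = ∫ t in Set.Ioo (0:ℝ) T, ∫ τ, G τ * V (t - τ) := hswap.symm
      _ = ∫ t in Set.Ioo (0:ℝ) T, |E t| := (integral_congr_ae hKey).symm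
  -- identify c with ∫ |v| on (0, η)
  have hceq : c = ∫ τ in (0:ℝ)..η, |v τ| := by
    rw [hcdef, intervalIntegral.integral_of_le hη.le, intervalIntegral.integral_of_le hη.le,
      integral_Ioc_eq_integral_Ioo, integral_Ioc_eq_integral_Ioo]
    refine setIntegral_congr_ae measurableSet_Ioo (Filter.Eventually.of_forall fun s hs => ?_)
    have hmem : s ∈ Set.Ioo (0:ℝ) T := Set.mem_Ioo.mpr ⟨hs.1, hs.2.trans hηT⟩
    rw [hVdef, Set.indicator_of_mem hmem]
  have hcpos : 0 < c := by rw [hceq]; exact hvpos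
  rw [intervalIntegral.integral_of_le (by linarith : (0:ℝ) ≤ T - η),
    intervalIntegral.integral_of_le hT0.le, integral_Ioc_eq_integral_Ioo,
    integral_Ioc_eq_integral_Ioo, ← hceq, inv_mul_eq_div, le_div_iff₀ hcpos]
  exact hmain
end
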